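/- Run PivotTracking and OPT* on the same finite request sequence σ from the same initial center c₀. For every request σ_i: PivotTracking applies its intersection behavior on σ_i if and only if σ_i is cheap for OPT*, and PivotTracking applies its union behavior on σ_i if and only if σ_i is expensive for OPT*. -/

import Mathlib

/-- Cost of serving request `r` when node `c` is at the center of the star. -/
def serveCost {V : Type*} [DecidableEq V] (c : V) (r : V × V) : ℕ :=
  if c = r.1 ∨ c = r.2 then 1 else 2

/-- Total cost of the schedule `cs` on request sequence `σ`, starting from
initial center `c₀`. -/
def schedCost {V : Type*} [DecidableEq V] (c₀ : V) : List (V × V) → List V → ℕ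
  | [], _ => 0
  | _ :: _, [] => 0
  | r :: σ, c :: cs => (if c = c₀ then 0 else 1) + serveCost c r + schedCost c σ cs

/-- Minimum cost over all (offline) schedules for `σ` starting with center `c₀`. -/
noncomputable def OPT {V : Type*} [DecidableEq V] (c₀ : V) (σ : List (V × V)) : ℕ :=
  sInf {k | ∃ cs : List V, cs.length = σ.length ∧ schedCost c₀ σ cs = k}

/-- The sequence of phase lengths of a schedule: the lengths of the maximal
runs of consecutive requests served with the same center. -/
def phaseLens {V : Type*} [DecidableEq V] (cs : List V) : List ℕ :=
  (cs.splitBy (· == ·)).map List.length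

/-- `IsOptStar c₀ σ cs` : `cs` is a minimum-cost schedule for `σ` that, among
all minimum-cost schedules, minimizes the lexicographic order on the reversed
sequence of its phase lengths. -/
def IsOptStar {V : Type*} [DecidableEq V] (c₀ : V) (σ : List (V × V))
    (cs : List V) : Prop :=
  cs.length = σ.length ∧ schedCost c₀ σ cs = OPT c₀ σ ∧
    ∀ cs' : List V, cs'.length = σ.length → schedCost c₀ σ cs' = OPT c₀ σ →
      (phaseLens cs).reverse ≤ (phaseLens cs').reverse

/-- The cost (migration plus serving) that the schedule `cs` pays on the
`i`-th request of `σ` (0-based). -/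
def optPay {V : Type*} [DecidableEq V] (c₀ : V) (σ : List (V × V))
    (cs : List V) (i : ℕ) : ℕ :=
  (if cs.getD i c₀ = (if i = 0 then c₀ else cs.getD (i - 1) c₀) then 0 else 1)
    + serveCost (cs.getD i c₀) (σ.getD i (c₀, c₀))

/-- One step of the deterministic algorithm PivotTracking (state = (center,
candidate set)); tie-breaking in the intersection behavior by the fixed rule `tb`. -/
def ptStep {V : Type*} [DecidableEq V] (tb : V → V → V) (st : V × Finset V)
    (r : V × V) : V × Finset V :=
  if (st.2 ∩ {r.1, r.2}).Nonempty then
    let C' := st.2 ∩ {r.1, r.2}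
    (if st.1 ∈ C' then st.1
     else if C' = {r.1, r.2} then tb r.1 r.2
     else if r.1 ∈ C' then r.1 else r.2, C')
  else (st.1, st.2 ∪ {r.1, r.2})

/-- The sequence of states of PivotTracking: `(ptStates tb c₀ σ).get i` is the
state (center, candidate set) just before the `i`-th request is served. -/
def ptStates {V : Type*} [DecidableEq V] (tb : V → V → V) (c₀ : V)
    (σ : List (V × V)) : List (V × Finset V) :=
  σ.scanl (ptStep tb) (c₀, {c₀})

/-!
Let `W_i c` be the least cost of serving the first `i` requests with `c` as the last center (the
work function). It obeys `W_{i+1} c = min (W_i c) (min W_i + 1) + cost(c, σ_{i+1})`, so if some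
minimizer of `W_i` lies in `σ_{i+1}`, then `min W` grows by `1` and the minimizers of `W_{i+1}` are
those minimizers inside `σ_{i+1}`; otherwise `min W` grows by `2` and the minimizers of `W_{i+1}` are
the old ones together with `σ_{i+1}`. Hence the candidate set of PivotTracking is exactly the set of
minimizers of `W_i`, and `OPT` of the prefix grows by `1` on intersection steps and by `2` on union
steps.

It remains to see that every prefix of `OPT*` is optimal, so that `OPT*` pays on `σ_i` exactly the
growth of `OPT`. Going backwards from the end: if the prefix before `σ_i` were not optimal while
the one after it is, then `OPT*` serves `σ_i` in place at cost `1` and its prefix costs `OPT + 1`.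
Replacing that prefix by an optimal one and migrating at `σ_i` gives another optimal schedule with
the same later phases but a shorter phase containing `σ_i`, contradicting the choice of `OPT*`.
-/

open List

section Phases

variable {α : Type*}

theorem List.exists_eq_replicate_append (l : List α) (c : α) :
    ∃ n v, l = replicate n c ++ v ∧ ∀ b ∈ v.head?, b ≠ c := by
  induction l with
  | nil => exact ⟨0, [], rfl, by simp⟩
  | cons a l ih =>
    by_cases hac : a = c
    · obtain ⟨n, v, rfl, hv⟩ := ih
      exact ⟨n + 1, v, by simp [hac, replicate_succ], hv⟩
    · exact ⟨0, a :: l, rfl, by simpa using hac⟩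

theorem List.exists_eq_append_replicate (l : List α) (c : α) :
    ∃ x n, l = x ++ replicate n c ∧ ∀ a ∈ x.getLast?, a ≠ c := by
  obtain ⟨n, v, hl, hv⟩ := l.reverse.exists_eq_replicate_append c
  refine ⟨v.reverse, n, ?_, by simpa using hv⟩
  rw [← reverse_reverse l, hl, reverse_append, reverse_replicate]

theorem List.take_add_one_eq_append_getD {l : List α} {i : ℕ} (hi : i < l.length)
    (d : α) : l.take (i + 1) = l.take i ++ [l.getD i d] := by
  rw [take_add_one, getElem?_eq_getElem hi, getD_eq_getElem _ _ hi, Option.toList_some]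

variable [DecidableEq α]

theorem phaseLens_append_replicate_append {x v : List α} {c : α} {n : ℕ} (hn : n ≠ 0)
    (hx : ∀ a ∈ x.getLast?, a ≠ c) (hv : ∀ b ∈ v.head?, b ≠ c) :
    phaseLens (x ++ replicate n c ++ v) = phaseLens x ++ n :: phaseLens v := by
  have hrep : (replicate n c).splitBy (· == ·) = [replicate n c] :=
    splitBy_of_isChain (by simpa using hn) (isChain_replicate_of_rel n (by simp))
  unfold phaseLens
  rw [splitBy_append, splitBy_append, hrep]
  · simp
  · intro a ha b hb
    simp only [head?_replicate, hn, if_false, Option.mem_def, Option.some.injEq] at hb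
    simpa [← hb] using hx a ha
  · intro a ha b hb
    simp only [getLast?_append, getLast?_replicate, hn, if_false, Option.some_or,
      Option.mem_def, Option.some.injEq] at ha
    simpa [← ha] using (hv b hb).symm

theorem phaseLens_reverse_lt {u l w : List α} {c : α} (hl : l.getLast? = some c)
    (hu : ∀ a ∈ u.getLast?, a ≠ c) :
    (phaseLens (u ++ c :: w)).reverse < (phaseLens (l ++ c :: w)).reverse := by
  obtain ⟨j, v, hw, hv⟩ := (c :: w).exists_eq_replicate_append c
  obtain ⟨x, k, rfl, hx⟩ := l.exists_eq_append_replicate c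
  have hj : j ≠ 0 := by
    rintro rfl
    simp only [replicate_zero, nil_append] at hw
    simp [← hw] at hv
  have hk : k ≠ 0 := by
    rintro rfl
    simp_all
  rw [hw, ← append_assoc, phaseLens_append_replicate_append hj hu hv, append_assoc,
    ← append_assoc (replicate k c), ← replicate_add, ← append_assoc,
    phaseLens_append_replicate_append (by omega) hx hv]
  simp only [reverse_append, reverse_cons, append_assoc, singleton_append]
  exact append_left_lt (Lex.rel (by omega))

end Phases

section Schedules

variable {V : Type*} [DecidableEq V]

theorem one_le_serveCost (c : V) (r : V × V) : 1 ≤ serveCost c r := by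
  unfold serveCost; split <;> omega

theorem serveCost_le_two (c : V) (r : V × V) : serveCost c r ≤ 2 := by
  unfold serveCost; split <;> omega

theorem schedCost_append {σ₁ : List (V × V)} {cs₁ : List V} (h : cs₁.length = σ₁.length)
    (b : V) (σ₂ : List (V × V)) (cs₂ : List V) :
    schedCost b (σ₁ ++ σ₂) (cs₁ ++ cs₂) =
      schedCost b σ₁ cs₁ + schedCost (cs₁.getLastD b) σ₂ cs₂ := by
  induction σ₁ generalizing cs₁ b with
  | nil =>
    obtain rfl := length_eq_zero_iff.mp h
    simp [schedCost]
  | cons r σ₁ ih =>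
    obtain _ | ⟨c, cs₁⟩ := cs₁
    · simp at h
    · simp only [cons_append, schedCost, getLastD_cons, ih (by simpa using h)]
      omega

theorem schedCost_append_cons {σ₁ : List (V × V)} {cs₁ : List V} (h : cs₁.length = σ₁.length)
    (b : V) (r : V × V) (σ₂ : List (V × V)) (c : V) (cs₂ : List V) :
    schedCost b (σ₁ ++ r :: σ₂) (cs₁ ++ c :: cs₂) = schedCost b σ₁ cs₁ +
      ((if c = cs₁.getLastD b then 0 else 1) + serveCost c r) + schedCost c σ₂ cs₂ := by
  rw [schedCost_append h, schedCost]
  omega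

theorem schedCost_append_singleton {σ : List (V × V)} {cs : List V} (h : cs.length = σ.length)
    (b : V) (r : V × V) (c : V) :
    schedCost b (σ ++ [r]) (cs ++ [c]) =
      schedCost b σ cs + ((if c = cs.getLastD b then 0 else 1) + serveCost c r) := by
  simpa [schedCost] using schedCost_append_cons h b r [] c []

theorem OPT_le_schedCost {c₀ : V} {σ : List (V × V)} {cs : List V} (h : cs.length = σ.length) :
    OPT c₀ σ ≤ schedCost c₀ σ cs :=
  Nat.sInf_le ⟨cs, h, rfl⟩

theorem exists_schedCost_eq_OPT (c₀ : V) (σ : List (V × V)) :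
    ∃ cs : List V, cs.length = σ.length ∧ schedCost c₀ σ cs = OPT c₀ σ :=
  Nat.sInf_mem (s := {k | ∃ cs : List V, cs.length = σ.length ∧ schedCost c₀ σ cs = k})
    ⟨_, replicate σ.length c₀, length_replicate, rfl⟩

theorem OPT_append_singleton_le (c₀ : V) (σ : List (V × V)) (r : V × V) :
    OPT c₀ (σ ++ [r]) ≤ OPT c₀ σ + 2 := by
  obtain ⟨cs, hlen, hcs⟩ := exists_schedCost_eq_OPT c₀ σ
  calc OPT c₀ (σ ++ [r]) ≤ schedCost c₀ (σ ++ [r]) (cs ++ [cs.getLastD c₀]) :=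
        OPT_le_schedCost (by simp [hlen])
    _ ≤ OPT c₀ σ + 2 := by
        rw [schedCost_append_singleton hlen, if_pos rfl, hcs]
        have := serveCost_le_two (cs.getLastD c₀) r
        omega

end Schedules

section WorkFunction

variable {V : Type*}

noncomputable def minSet (F : V → ℕ) : Set V := {c | F c = ⨅ x, F x}

theorem mem_minSet {F : V → ℕ} {c : V} : c ∈ minSet F ↔ F c = ⨅ x, F x :=
  Iff.rfl

variable [DecidableEq V]

noncomputable def workStep (F : V → ℕ) (r : V × V) (c : V) : ℕ :=
  min (F c) ((⨅ x, F x) + 1) + serveCost c r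

/-- `work c₀ σ c` is the least cost of serving `σ` from `c₀` with `c` as the last center
(for `σ = []`, of migrating from `c₀` to `c`). -/
noncomputable def work (c₀ : V) (σ : List (V × V)) : V → ℕ :=
  σ.foldl workStep fun c => if c = c₀ then 0 else 1

theorem workStep_le (F : V → ℕ) (r : V × V) (b c : V) :
    workStep F r c ≤ F b + ((if c = b then 0 else 1) + serveCost c r) := by
  have : (⨅ x, F x) ≤ F b := ciInf_le (OrderBot.bddBelow _) b
  unfold workStep
  split_ifs with h
  · subst h; omega
  · omega

theorem workStep_eq_iInf_add (F : V → ℕ) (r : V × V) (c : V) :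
    workStep F r c = (⨅ x, F x) + (if F c = ⨅ x, F x then 0 else 1) +
      (if c ∈ ({r.1, r.2} : Set V) then 0 else 1) + 1 := by
  have : (⨅ x, F x) ≤ F c := ciInf_le (OrderBot.bddBelow _) c
  rw [workStep, serveCost, min_def]
  split_ifs <;> simp_all <;> omega

theorem minSet_work_nil (c₀ : V) : minSet (work c₀ []) = {c₀} := by
  have : ⨅ c, work c₀ [] c = 0 :=
    Nat.eq_zero_of_le_zero (ciInf_le_of_le (OrderBot.bddBelow _) c₀ (by simp [work]))
  ext c
  rw [Set.mem_singleton_iff, mem_minSet, this]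
  simp [work]

variable [Nonempty V]

theorem workStep_of_inter_nonempty {F : V → ℕ} {r : V × V}
    (h : (minSet F ∩ {r.1, r.2}).Nonempty) :
    ⨅ c, workStep F r c = (⨅ c, F c) + 1 ∧ minSet (workStep F r) = minSet F ∩ {r.1, r.2} := by
  obtain ⟨p, hp, hpr⟩ := h
  have hinf : ⨅ c, workStep F r c = (⨅ c, F c) + 1 := by
    refine le_antisymm (ciInf_le_of_le (OrderBot.bddBelow _) p ?_) (le_ciInf fun x => ?_)
    · rw [workStep_eq_iInf_add, if_pos (mem_minSet.mp hp), if_pos hpr]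
    · rw [workStep_eq_iInf_add]; omega
  refine ⟨hinf, Set.ext fun x => ?_⟩
  rw [Set.mem_inter_iff, mem_minSet, mem_minSet, hinf, workStep_eq_iInf_add]
  by_cases h₁ : F x = ⨅ c, F c <;> by_cases h₂ : x ∈ ({r.1, r.2} : Set V) <;>
    simp [h₁, h₂, add_assoc]

theorem workStep_of_inter_eq_empty {F : V → ℕ} {r : V × V} (h : minSet F ∩ {r.1, r.2} = ∅) :
    ⨅ c, workStep F r c = (⨅ c, F c) + 2 ∧ minSet (workStep F r) = minSet F ∪ {r.1, r.2} := by
  have hdisj (x : V) (hx : F x = ⨅ c, F c) : x ∉ ({r.1, r.2} : Set V) :=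
    fun hr => h.subset ⟨hx, hr⟩
  obtain ⟨p, hp⟩ : ∃ p, F p = ⨅ c, F c := ciInf_mem F
  have hinf : ⨅ c, workStep F r c = (⨅ c, F c) + 2 := by
    refine le_antisymm (ciInf_le_of_le (OrderBot.bddBelow _) p ?_) (le_ciInf fun x => ?_)
    · rw [workStep_eq_iInf_add, if_pos hp, if_neg (hdisj p hp)]
    · rw [workStep_eq_iInf_add]
      by_cases h₁ : F x = ⨅ c, F c
      · rw [if_pos h₁, if_neg (hdisj x h₁)]
      · rw [if_neg h₁]; omega
  refine ⟨hinf, Set.ext fun x => ?_⟩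
  rw [Set.mem_union, mem_minSet, mem_minSet, hinf, workStep_eq_iInf_add]
  by_cases h₁ : F x = ⨅ c, F c
  · simp [h₁, hdisj x h₁]
  · by_cases h₂ : x ∈ ({r.1, r.2} : Set V) <;> simp [h₁, h₂]

end WorkFunction

section WorkAndOPT

variable {V : Type*} [DecidableEq V] (c₀ : V)

theorem work_append_singleton (σ : List (V × V)) (r : V × V) :
    work c₀ (σ ++ [r]) = workStep (work c₀ σ) r := by
  simp [work]

variable {c₀}

theorem work_getLastD_le_schedCost {σ : List (V × V)} {cs : List V}
    (h : cs.length = σ.length) : work c₀ σ (cs.getLastD c₀) ≤ schedCost c₀ σ cs := by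
  induction σ using reverseRecOn generalizing cs with
  | nil =>
    obtain rfl := length_eq_zero_iff.mp h
    simp [work, schedCost]
  | append_singleton σ r ih =>
    obtain ⟨cs, c, rfl⟩ : ∃ cs' c, cs = cs' ++ [c] :=
      (eq_nil_or_concat' cs).resolve_left (by rintro rfl; simp at h)
    have hcs : cs.length = σ.length := by simpa using h
    rw [schedCost_append_singleton hcs, work_append_singleton, getLastD_concat]
    exact (workStep_le _ r _ c).trans (Nat.add_le_add_right (ih hcs) _)

variable (c₀)

theorem exists_schedCost_add_le_work (σ : List (V × V)) (q : V) :
    ∃ cs : List V, cs.length = σ.length ∧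
      schedCost c₀ σ cs + (if q = cs.getLastD c₀ then 0 else 1) ≤ work c₀ σ q := by
  induction σ using reverseRecOn generalizing q with
  | nil => exact ⟨[], rfl, by simp [schedCost, work]⟩
  | append_singleton σ r ih =>
    have : Nonempty V := ⟨c₀⟩
    rw [work_append_singleton, workStep]
    by_cases hstay : work c₀ σ q ≤ (⨅ x, work c₀ σ x) + 1
    · obtain ⟨cs, hcs, hle⟩ := ih q
      refine ⟨cs ++ [q], by simp [hcs], ?_⟩
      rw [schedCost_append_singleton hcs, getLastD_concat, if_pos rfl, min_eq_left hstay]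
      omega
    · obtain ⟨p, hp⟩ : ∃ p, work c₀ σ p = ⨅ x, work c₀ σ x := ciInf_mem _
      obtain ⟨cs, hcs, hle⟩ := ih p
      refine ⟨cs ++ [q], by simp [hcs], ?_⟩
      rw [schedCost_append_singleton hcs, getLastD_concat, if_pos rfl,
        min_eq_right (not_le.mp hstay).le]
      split_ifs at hle ⊢ <;> omega

theorem OPT_eq_iInf_work (σ : List (V × V)) : OPT c₀ σ = ⨅ c, work c₀ σ c := by
  have : Nonempty V := ⟨c₀⟩
  obtain ⟨cs, hcs, hopt⟩ := exists_schedCost_eq_OPT c₀ σ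
  refine le_antisymm (le_ciInf fun q => ?_) ?_
  · obtain ⟨u, hu, hle⟩ := exists_schedCost_add_le_work c₀ σ q
    exact (OPT_le_schedCost hu).trans (by omega)
  · exact (ciInf_le (OrderBot.bddBelow _) _).trans (hopt ▸ work_getLastD_le_schedCost hcs)

open Classical in
theorem OPT_append_singleton (σ : List (V × V)) (r : V × V) :
    OPT c₀ (σ ++ [r]) =
      OPT c₀ σ + if (minSet (work c₀ σ) ∩ {r.1, r.2}).Nonempty then 1 else 2 := by
  have : Nonempty V := ⟨c₀⟩
  rw [OPT_eq_iInf_work, OPT_eq_iInf_work, work_append_singleton]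
  split_ifs with h
  · exact (workStep_of_inter_nonempty h).1
  · exact (workStep_of_inter_eq_empty (Set.not_nonempty_iff_eq_empty.mp h)).1

end WorkAndOPT

section OptStar

variable {V : Type*} [DecidableEq V] {c₀ : V}

theorem IsOptStar.schedCost_eq_OPT_of_append_singleton {σ₁ σ₂ : List (V × V)} {r : V × V}
    {cs₁ ct : List V} {c : V} (hstar : IsOptStar c₀ (σ₁ ++ r :: σ₂) (cs₁ ++ c :: ct))
    (h₁ : cs₁.length = σ₁.length)
    (hnext : schedCost c₀ (σ₁ ++ [r]) (cs₁ ++ [c]) = OPT c₀ (σ₁ ++ [r])) :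
    schedCost c₀ σ₁ cs₁ = OPT c₀ σ₁ := by
  obtain ⟨hlen, hopt, hmin⟩ := hstar
  have hct : ct.length = σ₂.length := by simp [h₁] at hlen; omega
  by_contra hne
  have hworse : OPT c₀ σ₁ + 1 ≤ schedCost c₀ σ₁ cs₁ := (OPT_le_schedCost h₁).lt_of_ne' hne
  have hserve := one_le_serveCost c r
  have hgrow := OPT_append_singleton_le c₀ σ₁ r
  rw [schedCost_append_singleton h₁] at hnext
  have hstay : c = cs₁.getLastD c₀ := by
    by_contra h
    rw [if_neg h] at hnext
    omega
  rw [schedCost_append_cons h₁, if_pos hstay] at hopt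
  obtain ⟨u, hu, hu_opt⟩ := exists_schedCost_eq_OPT c₀ σ₁
  have hle : OPT c₀ (σ₁ ++ r :: σ₂) ≤ schedCost c₀ (σ₁ ++ r :: σ₂) (u ++ c :: ct) :=
    OPT_le_schedCost (by simp [hu, hct])
  rw [schedCost_append_cons hu, hu_opt] at hle
  have hmove : u.getLastD c₀ ≠ c := by
    intro h
    rw [if_pos h.symm] at hle
    omega
  -- `u ++ c :: ct` is optimal as well, but its phase of `c` starts one request later
  have hopt' : schedCost c₀ (σ₁ ++ r :: σ₂) (u ++ c :: ct) = OPT c₀ (σ₁ ++ r :: σ₂) := by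
    rw [schedCost_append_cons hu, hu_opt, if_neg (Ne.symm hmove)]
    omega
  have hcs₁ : cs₁.getLast? = some c := by
    rcases h : cs₁.getLast? with _ | a
    · obtain rfl := getLast?_eq_none_iff.mp h
      obtain rfl := length_eq_zero_iff.mp h₁.symm
      simp [schedCost] at hworse
    · rw [hstay, getLastD_eq_getLast?, h, Option.getD_some]
  have hu_last : ∀ a ∈ u.getLast?, a ≠ c := by
    intro a ha
    rwa [getLastD_eq_getLast?, Option.mem_def.mp ha, Option.getD_some] at hmove
  exact absurd (hmin _ (by simp [hu, hct]) hopt') (not_le.mpr (phaseLens_reverse_lt hcs₁ hu_last))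

theorem IsOptStar.schedCost_eq_OPT_of_eq_append {σ σ₁ σ₂ : List (V × V)} {cs cs₁ cs₂ : List V}
    (hstar : IsOptStar c₀ σ cs) (hσ : σ = σ₁ ++ σ₂) (hcs : cs = cs₁ ++ cs₂)
    (h₁ : cs₁.length = σ₁.length) :
    schedCost c₀ σ₁ cs₁ = OPT c₀ σ₁ := by
  subst hσ hcs
  induction σ₂ generalizing σ₁ cs₁ cs₂ with
  | nil =>
    obtain rfl : cs₂ = [] := length_eq_zero_iff.mp (by simpa [h₁] using hstar.1)
    simpa using hstar.2.1
  | cons r σ₂ ih =>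
    obtain _ | ⟨c, ct⟩ := cs₂
    · simpa [h₁] using hstar.1
    · exact hstar.schedCost_eq_OPT_of_append_singleton h₁
        (ih (σ₁ := σ₁ ++ [r]) (cs₁ := cs₁ ++ [c]) (by simp [h₁]) (by simpa using hstar))

theorem IsOptStar.schedCost_take {σ : List (V × V)} {cs : List V} (hstar : IsOptStar c₀ σ cs)
    (i : ℕ) : schedCost c₀ (σ.take i) (cs.take i) = OPT c₀ (σ.take i) :=
  hstar.schedCost_eq_OPT_of_eq_append (take_append_drop i σ).symm (take_append_drop i cs).symm
    (by simp [hstar.1])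

end OptStar

section OptPay

variable {V : Type*} [DecidableEq V] {c₀ : V} {σ : List (V × V)} {cs : List V}

theorem schedCost_take_add_one (hlen : cs.length = σ.length) {i : ℕ} (hi : i < σ.length) :
    schedCost c₀ (σ.take (i + 1)) (cs.take (i + 1)) =
      schedCost c₀ (σ.take i) (cs.take i) + optPay c₀ σ cs i := by
  rw [take_add_one_eq_append_getD hi (c₀, c₀), take_add_one_eq_append_getD (hlen ▸ hi) c₀,
    schedCost_append_singleton (by simp [hlen]), optPay]
  rcases i with _ | i
  · simp
  · simp [getLastD_eq_getLast?, getLast?_take, getElem?_eq_getElem (by omega : i < cs.length)]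

theorem IsOptStar.OPT_take_add_one (hstar : IsOptStar c₀ σ cs) {i : ℕ} (hi : i < σ.length) :
    OPT c₀ (σ.take (i + 1)) = OPT c₀ (σ.take i) + optPay c₀ σ cs i := by
  rw [← hstar.schedCost_take, ← hstar.schedCost_take, schedCost_take_add_one hstar.1 hi]

end OptPay

section PivotTracking

variable {V : Type*} [DecidableEq V] (tb : V → V → V)

theorem coe_ptStep_snd [Nonempty V] {st : V × Finset V} {F : V → ℕ} (h : (st.2 : Set V) = minSet F)
    (r : V × V) : ((ptStep tb st r).2 : Set V) = minSet (workStep F r) := by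
  have hinter : ((st.2 ∩ {r.1, r.2} : Finset V) : Set V) = minSet F ∩ {r.1, r.2} := by
    push_cast [h]; rfl
  unfold ptStep
  split_ifs with hne
  · rw [(workStep_of_inter_nonempty (hinter ▸ Finset.coe_nonempty.mpr hne)).2, ← hinter]
  · rw [(workStep_of_inter_eq_empty ?_).2]
    · push_cast [h]; rfl
    · rw [← hinter, Finset.coe_eq_empty, ← Finset.not_nonempty_iff_eq_empty]
      exact hne

theorem coe_foldl_ptStep_snd [Nonempty V] (σ : List (V × V)) {st : V × Finset V} {F : V → ℕ}
    (h : (st.2 : Set V) = minSet F) :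
    ((σ.foldl (ptStep tb) st).2 : Set V) = minSet (σ.foldl workStep F) := by
  induction σ generalizing st F with
  | nil => exact h
  | cons r σ ih => exact ih (coe_ptStep_snd tb h r)

theorem coe_ptStates_getD_snd (c₀ : V) {σ : List (V × V)} {i : ℕ} (hi : i ≤ σ.length) :
    (((ptStates tb c₀ σ).getD i (c₀, {c₀})).2 : Set V) = minSet (work c₀ (σ.take i)) := by
  have : Nonempty V := ⟨c₀⟩
  rw [ptStates, getD_eq_getElem _ _ (by simpa using hi), getElem_scanl]
  exact coe_foldl_ptStep_snd tb _ (F := work c₀ []) (by rw [minSet_work_nil]; simp)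

end PivotTracking

theorem pivotTracking_tracks_optStar_general
    {V : Type*} [DecidableEq V]
    (c₀ : V) (σ : List (V × V))
    (tb : V → V → V)
    (cs : List V) (hstar : IsOptStar c₀ σ cs) (i : ℕ) (hi : i < σ.length) :
    ((((ptStates tb c₀ σ).getD i (c₀, {c₀})).2 ∩
        {(σ.getD i (c₀, c₀)).1, (σ.getD i (c₀, c₀)).2}).Nonempty
      ↔ optPay c₀ σ cs i = 1) ∧
    (¬ (((ptStates tb c₀ σ).getD i (c₀, {c₀})).2 ∩
        {(σ.getD i (c₀, c₀)).1, (σ.getD i (c₀, c₀)).2}).Nonempty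
      ↔ optPay c₀ σ cs i = 2) := by
  set C := ((ptStates tb c₀ σ).getD i (c₀, {c₀})).2
  set r := σ.getD i (c₀, c₀)
  have hpay := hstar.OPT_take_add_one hi
  rw [take_add_one_eq_append_getD hi (c₀, c₀), OPT_append_singleton] at hpay
  have hC : (C ∩ {r.1, r.2}).Nonempty ↔ (minSet (work c₀ (σ.take i)) ∩ {r.1, r.2}).Nonempty := by
    rw [← Finset.coe_nonempty, Finset.coe_inter, coe_ptStates_getD_snd tb c₀ hi.le]
    push_cast; rfl
  rw [hC]
  split_ifs at hpay with h
  · exact ⟨iff_of_true h (by omega), iff_of_false (not_not_intro h) (by omega)⟩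
  · exact ⟨iff_of_false h (by omega), iff_of_true h (by omega)⟩

/-- **tracking lemma.** Run PivotTracking and `OPT*` on the
same finite request sequence `σ` from the same initial center `c₀`.  For every
request `σᵢ`: PivotTracking applies its intersection behavior on `σᵢ`
(i.e. the candidate set before step `i` intersects `σᵢ`) iff `σᵢ` is cheap for
`OPT*` (`OPT*` pays `1` on it), and PivotTracking applies its union behavior
on `σᵢ` iff `σᵢ` is expensive for `OPT*` (`OPT*` pays `2` on it). -/
theorem pivotTracking_tracks_optStar
    {V : Type*} [DecidableEq V] [Fintype V] (hn : 3 ≤ Fintype.card V)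
    (c₀ : V) (σ : List (V × V)) (hσ : ∀ r ∈ σ, r.1 ≠ r.2)
    (tb : V → V → V) (htb : ∀ u v : V, tb u v = u ∨ tb u v = v)
    (cs : List V) (hstar : IsOptStar c₀ σ cs) (i : ℕ) (hi : i < σ.length) :
    ((((ptStates tb c₀ σ).getD i (c₀, {c₀})).2 ∩
        {(σ.getD i (c₀, c₀)).1, (σ.getD i (c₀, c₀)).2}).Nonempty
      ↔ optPay c₀ σ cs i = 1) ∧
    (¬ (((ptStates tb c₀ σ).getD i (c₀, {c₀})).2 ∩
        {(σ.getD i (c₀, c₀)).1, (σ.getD i (c₀, c₀)).2}).Nonempty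
      ↔ optPay c₀ σ cs i = 2) :=
  pivotTracking_tracks_optStar_general c₀ σ tb cs hstar i hi
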